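/- Let q_a[u,g] be a parameterized conservation law multiplier for F^a[u,g] and the current J^μ[u,g], let ω be a real constant, and let {δu_i, δg_l} be a characteristic. If (i) δ(F^a q_a) = ω F^a q_a holds for every smooth u and every smooth (not necessarily constant) g, and (ii) D_μ δg_l = 0 whenever g is constant, then δJ^μ − ωJ^μ is conserved for every smooth u and every constant g, i.e. D_μ(δJ^μ − ωJ^μ) = 0 for arbitrary u and constant g. -/

import Mathlib

namespace Paper

/-- The base space ℝ^{D+1} (coordinates x^μ, μ = 0,…,D). -/
abbrev Ed (D : ℕ) := Fin (D + 1) → ℝ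

/-- Partial derivative ∂_μ of a real function on ℝ^{D+1}. -/
noncomputable def pd {D : ℕ} (μ : Fin (D + 1)) (f : Ed D → ℝ) : Ed D → ℝ :=
  fun x => fderiv ℝ f x (Pi.single μ 1)

/-- Iterated partial derivatives ∂_{μ₁…μ_k} along a list of directions. -/
noncomputable def pds {D : ℕ} : List (Fin (D + 1)) → (Ed D → ℝ) → Ed D → ℝ
  | [], f => f
  | μ :: l, f => pd μ (pds l f)

/-- Total divergence D_μ J^μ of a current. -/
noncomputable def Dvg {D : ℕ} (J : Fin (D + 1) → Ed D → ℝ) : Ed D → ℝ :=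
  fun x => ∑ μ, pd μ (J μ) x

/-- Multi-indices of order ≤ m: ordered tuples of coordinate directions. -/
abbrev MIdx (m D : ℕ) := Σ k : Fin (m + 1), (Fin (k : ℕ) → Fin (D + 1))

def MIdx.toList {m D : ℕ} (β : MIdx m D) : List (Fin (D + 1)) := List.ofFn β.2

def zeroIdx {m D : ℕ} : MIdx m D := ⟨⟨0, Nat.succ_pos m⟩, fun t => t.elim0⟩

def oneIdx {m D : ℕ} (hm : 0 < m) (μ : Fin (D + 1)) : MIdx m D :=
  ⟨⟨1, Nat.succ_lt_succ hm⟩, fun _ => μ⟩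

/-- The jet space of order m for fields indexed by ι. -/
abbrev Jet (ι : Type) (m D : ℕ) := (ι × MIdx m D) → ℝ

/-- The m-jet of a field configuration at a point. -/
noncomputable def jet {D : ℕ} {ι : Type} (m : ℕ) (u : ι → Ed D → ℝ) (x : Ed D) :
    Jet ι m D := fun c => pds (MIdx.toList c.2) (u c.1) x

/-- Evaluation of a local function on a field configuration: f[u](x). -/
noncomputable def realize {D : ℕ} {ι : Type} (m : ℕ) (f : Ed D × Jet ι m D → ℝ)
    (u : ι → Ed D → ℝ) : Ed D → ℝ :=
  fun x => f (x, jet m u x)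

/-- Partial derivative ∂f/∂(∂_β u_i) of a local function w.r.t. a jet coordinate. -/
noncomputable def jpd {D : ℕ} {ι : Type} [Fintype ι] [DecidableEq ι] {m : ℕ}
    (f : Ed D × Jet ι m D → ℝ) (c : ι × MIdx m D) : Ed D × Jet ι m D → ℝ :=
  fun p => fderiv ℝ f p (0, Pi.single c 1)

/-- Smooth fields on Ω. -/
def SmoothFields {D : ℕ} {ι : Type} (Ω : Set (Ed D)) (u : ι → Ed D → ℝ) : Prop :=
  ∀ i, ContDiffOn ℝ (⊤ : ℕ∞) (u i) Ω

/-- Variation δf of a local function along a characteristic, the latter given by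
its realized component functions v_i. -/
noncomputable def variation {D : ℕ} {ι : Type} [Fintype ι] [DecidableEq ι] (m : ℕ)
    (f : Ed D × Jet ι m D → ℝ) (u v : ι → Ed D → ℝ) : Ed D → ℝ :=
  fun x => ∑ c : ι × MIdx m D, jpd f c (x, jet m u x) * pds (MIdx.toList c.2) (v c.1) x

/-- Euler–Lagrange derivative E^i(f) of a local function, evaluated on u. -/
noncomputable def EL {D : ℕ} {ι : Type} [Fintype ι] [DecidableEq ι] (m : ℕ)
    (f : Ed D × Jet ι m D → ℝ) (u : ι → Ed D → ℝ) (i : ι) : Ed D → ℝ :=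
  fun x => ∑ β : MIdx m D, (-1 : ℝ) ^ (β.1 : ℕ) *
    pds (MIdx.toList β) (fun y => jpd f (i, β) (y, jet m u y)) x

/-- The general integration-by-parts boundary current 𝒢^μ. -/
noncomputable def bdryG {D : ℕ} {A : Type} [Fintype A] (m : ℕ)
    (G : A × MIdx m D → Ed D → ℝ) (ε : A → Ed D → ℝ) (μ : Fin (D + 1)) : Ed D → ℝ :=
  fun x => ∑ a : A, ∑ k : Fin m, ∑ lam : Fin (k : ℕ) → Fin (D + 1),
    ∑ j ∈ Finset.range ((k : ℕ) + 1),
      (-1 : ℝ) ^ j *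
        pds ((List.ofFn lam).take j)
          (G (a, ⟨⟨(k : ℕ) + 1, Nat.succ_lt_succ k.isLt⟩, Fin.cons μ lam⟩)) x *
        pds ((List.ofFn lam).drop j) (ε a) x

/-- Ĝ_α = Σ_β (−1)^{|β|} ∂_β G_α^β. -/
noncomputable def hatG {D : ℕ} {A : Type} (m : ℕ)
    (G : A × MIdx m D → Ed D → ℝ) (a : A) : Ed D → ℝ :=
  fun x => ∑ β : MIdx m D, (-1 : ℝ) ^ (β.1 : ℕ) * pds (MIdx.toList β) (G (a, β)) x

/-- The boundary current j^μ of a local function f w.r.t. a characteristic v at u. -/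
noncomputable def lfBdry {D : ℕ} {ι : Type} [Fintype ι] [DecidableEq ι] (m : ℕ)
    (f : Ed D × Jet ι m D → ℝ) (u v : ι → Ed D → ℝ) (μ : Fin (D + 1)) : Ed D → ℝ :=
  bdryG m (fun c x => jpd f c (x, jet m u x)) v μ

/-- j^μ_{(Fρ)}: the boundary current of F^aρ_a in which ρ_a is not differentiated
(ρ_a substituted after the differentiations). -/
noncomputable def jFrho {D : ℕ} {ι κ : Type} [Fintype ι] [DecidableEq ι] [Fintype κ] (m : ℕ)
    (F : κ → Ed D × Jet ι m D → ℝ) (u : ι → Ed D → ℝ) (ρ : κ → Ed D → ℝ)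
    (v : ι → Ed D → ℝ) (μ : Fin (D + 1)) : Ed D → ℝ :=
  bdryG m (fun c x => ∑ a, jpd (F a) c (x, jet m u x) * ρ a x) v μ

/-- j^μ_{(F̃q)}|_{F̃=F}: only q_a is differentiated, F^a treated as a function of x. -/
noncomputable def jFtilq {D : ℕ} {ι κ : Type} [Fintype ι] [DecidableEq ι] [Fintype κ] (m : ℕ)
    (F q : κ → Ed D × Jet ι m D → ℝ) (u v : ι → Ed D → ℝ) (μ : Fin (D + 1)) : Ed D → ℝ :=
  bdryG m (fun c x => ∑ a, F a (x, jet m u x) * jpd (q a) c (x, jet m u x)) v μ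

/-- The adjoint equations' left-hand side E^i(F^aρ_a), with the ρ_a treated as
independent fields and their values substituted after the differentiations. -/
noncomputable def adjointOp {D : ℕ} {ι κ : Type} [Fintype ι] [DecidableEq ι] [Fintype κ] (m : ℕ)
    (F : κ → Ed D × Jet ι m D → ℝ) (u : ι → Ed D → ℝ) (ρ : κ → Ed D → ℝ) (i : ι) : Ed D → ℝ :=
  fun x => ∑ β : MIdx m D, (-1 : ℝ) ^ (β.1 : ℕ) *
    pds (MIdx.toList β) (fun y => ∑ a, jpd (F a) (i, β) (y, jet m u y) * ρ a y) x

/-- Solutions of the system F^a = 0 on Ω. -/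
def IsSol {D : ℕ} {ι κ : Type} (m : ℕ) (Ω : Set (Ed D)) (F : κ → Ed D × Jet ι m D → ℝ)
    (u : ι → Ed D → ℝ) : Prop :=
  SmoothFields Ω u ∧ ∀ a, ∀ x ∈ Ω, realize m (F a) u x = 0

/-- A characteristic δu (given by local functions) is a symmetry of F = 0. -/
def IsSymmetry {D : ℕ} {ι κ : Type} [Fintype ι] [DecidableEq ι] (m : ℕ) (Ω : Set (Ed D))
    (F : κ → Ed D × Jet ι m D → ℝ) (δu : ι → Ed D × Jet ι m D → ℝ) : Prop :=
  ∀ u, IsSol m Ω F u → ∀ a, ∀ x ∈ Ω,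
    variation m (F a) u (fun i => realize m (δu i) u) x = 0

/-- The u-part of a combined (u, ρ) jet. -/
def uPartJet {D : ℕ} {ι κ : Type} {m : ℕ} (z : Jet (ι ⊕ κ) m D) : Jet ι m D :=
  fun c => z (Sum.inl c.1, c.2)

/-- The auxiliary Lagrangian L̂ = F^a ρ_a as a local function of the combined fields (u, ρ). -/
noncomputable def Lhat {D : ℕ} {ι κ : Type} [Fintype κ] {m : ℕ}
    (F : κ → Ed D × Jet ι m D → ℝ) : Ed D × Jet (ι ⊕ κ) m D → ℝ :=
  fun p => ∑ a, F a (p.1, uPartJet p.2) * p.2 (Sum.inr a, zeroIdx)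

/-- The product F^a q_a as a single local function of u. -/
noncomputable def prodFq {D : ℕ} {ι κ : Type} [Fintype κ] {m : ℕ}
    (F q : κ → Ed D × Jet ι m D → ℝ) : Ed D × Jet ι m D → ℝ :=
  fun p => ∑ a, F a p * q a p

/-- Conservation law multiplier: F^a q_a = D_μ J^μ for every smooth u. -/
def Multiplier {D : ℕ} {ι κ : Type} [Fintype κ] (m : ℕ) (Ω : Set (Ed D))
    (F q : κ → Ed D × Jet ι m D → ℝ) (J : Fin (D + 1) → Ed D × Jet ι m D → ℝ) : Prop :=
  ∀ u, SmoothFields Ω u → ∀ x ∈ Ω,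
    (∑ a, realize m (F a) u x * realize m (q a) u x) = Dvg (fun μ => realize m (J μ) u) x

/-- Equivalence of configuration-indexed local currents relative to the system F = 0:
the difference is an identically conserved local current plus a local current
vanishing on all solutions. -/
def EquivCurrents {D : ℕ} {ι κ : Type} [Fintype ι] (m : ℕ) (Ω : Set (Ed D))
    (F : κ → Ed D × Jet ι m D → ℝ)
    (C1 C2 : (ι → Ed D → ℝ) → Fin (D + 1) → Ed D → ℝ) : Prop :=
  ∃ (m' : ℕ) (Jb Jh : Fin (D + 1) → Ed D × Jet ι m' D → ℝ),
    (∀ μ, ContDiff ℝ (⊤ : ℕ∞) (Jb μ)) ∧ (∀ μ, ContDiff ℝ (⊤ : ℕ∞) (Jh μ)) ∧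
    (∀ u, SmoothFields Ω u → ∀ μ, ∀ x ∈ Ω,
      C1 u μ x - C2 u μ x = realize m' (Jb μ) u x + realize m' (Jh μ) u x) ∧
    (∀ u, SmoothFields Ω u → ∀ x ∈ Ω, Dvg (fun μ => realize m' (Jb μ) u) x = 0) ∧
    (∀ u, IsSol m Ω F u → ∀ μ, ∀ x ∈ Ω, realize m' (Jh μ) u x = 0)

/-- Linearization G^a of F^a around the configuration u. -/
noncomputable def linearize {D : ℕ} {ι κ : Type} [Fintype ι] (m : ℕ)
    (F : κ → Ed D × Jet ι m D → ℝ) (u : ι → Ed D → ℝ) :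
    κ → Ed D × Jet ι m D → ℝ :=
  fun a p => fderiv ℝ (F a) (p.1, jet m u p.1) ((0 : Ed D), p.2)

/- ### Extended systems: fields (u, g), with F depending on g but not on its derivatives. -/

/-- Domain of extended local functions: base point, jet of u, and the values of g. -/
abbrev PJet (ι γ : Type) (m D : ℕ) := Ed D × Jet ι m D × (γ → ℝ)

noncomputable def realizeP {D : ℕ} {ι γ : Type} (m : ℕ)
    (f : PJet ι γ m D → ℝ) (u : ι → Ed D → ℝ) (g : γ → Ed D → ℝ) : Ed D → ℝ :=
  fun x => f (x, jet m u x, fun l => g l x)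

/-- ∂f/∂g_l for extended local functions. -/
noncomputable def gpd {D : ℕ} {ι γ : Type} [Fintype ι] [Fintype γ] [DecidableEq γ] {m : ℕ}
    (f : PJet ι γ m D → ℝ) (l : γ) : PJet ι γ m D → ℝ :=
  fun p => fderiv ℝ f p (0, 0, Pi.single l 1)

/-- ∂f/∂(∂_β u_i) for extended local functions. -/
noncomputable def jpdP {D : ℕ} {ι γ : Type} [Fintype ι] [DecidableEq ι] [Fintype γ] {m : ℕ}
    (f : PJet ι γ m D → ℝ) (c : ι × MIdx m D) : PJet ι γ m D → ℝ :=
  fun p => fderiv ℝ f p (0, Pi.single c 1, 0)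

/-- An extended local function viewed as a local function of the combined fields (u, g). -/
noncomputable def liftP {D : ℕ} {ι γ : Type} {m : ℕ} (f : PJet ι γ m D → ℝ) :
    Ed D × Jet (ι ⊕ γ) m D → ℝ :=
  fun p => f (p.1, fun c => p.2 (Sum.inl c.1, c.2), fun l => p.2 (Sum.inr l, zeroIdx))

/-- Setting all the derivatives of g to zero in a local function of (u, g). -/
noncomputable def dropGDerivs {D : ℕ} {ι γ : Type} {m : ℕ}
    (f : Ed D × Jet (ι ⊕ γ) m D → ℝ) : PJet ι γ m D → ℝ :=
  fun p => f (p.1, fun w =>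
    match w with
    | (Sum.inl i, β) => p.2.1 (i, β)
    | (Sum.inr l, β) => if (β.1 : ℕ) = 0 then p.2.2 l else 0)

/-- Parameterized conservation law multiplier: F^a q_a = D_μ J^μ for every smooth u
and every constant g. -/
def ParamMultiplier {D : ℕ} {ι γ κ : Type} [Fintype κ] (m : ℕ) (Ω : Set (Ed D))
    (F q : κ → PJet ι γ m D → ℝ) (J : Fin (D + 1) → PJet ι γ m D → ℝ) : Prop :=
  ∀ u, SmoothFields Ω u → ∀ c : γ → ℝ, ∀ x ∈ Ω,
    (∑ a, F a (x, jet m u x, c) * q a (x, jet m u x, c)) =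
      Dvg (fun μ y => J μ (y, jet m u y, c)) x

/-- Solutions of the extended system F^a = 0, ∂_μ g_l = 0 on Ω. -/
def ExtSol {D : ℕ} {ι γ κ : Type} (m : ℕ) (Ω : Set (Ed D))
    (F : κ → PJet ι γ m D → ℝ) (u : ι → Ed D → ℝ) (g : γ → Ed D → ℝ) : Prop :=
  SmoothFields Ω u ∧ SmoothFields Ω g ∧
    (∀ a, ∀ x ∈ Ω, realizeP m (F a) u g x = 0) ∧
    (∀ l μ, ∀ x ∈ Ω, pd μ (g l) x = 0)

/-- Conservation law multiplier {q_a, θ^{μl}} for the extended system, with current J. -/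
def ExtMultiplier {D : ℕ} {ι γ κ : Type} [Fintype κ] [Fintype γ] (m : ℕ) (Ω : Set (Ed D))
    (F q : κ → PJet ι γ m D → ℝ) (θ : Fin (D + 1) → γ → PJet ι γ m D → ℝ)
    (J : Fin (D + 1) → PJet ι γ m D → ℝ) : Prop :=
  ∀ u g, SmoothFields Ω u → SmoothFields Ω g → ∀ x ∈ Ω,
    ((∑ a, realizeP m (F a) u g x * realizeP m (q a) u g x) +
      ∑ μ, ∑ l, pd μ (g l) x * realizeP m (θ μ l) u g x) =
    Dvg (fun μ => realizeP m (J μ) u g) x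

/-- j^μ_{(Fρ)} for an extended system. -/
noncomputable def jFrhoP {D : ℕ} {ι γ κ : Type} [Fintype ι] [DecidableEq ι] [Fintype γ]
    [Fintype κ] (m : ℕ) (F : κ → PJet ι γ m D → ℝ) (u : ι → Ed D → ℝ) (g : γ → Ed D → ℝ)
    (ρ : κ → Ed D → ℝ) (v : ι → Ed D → ℝ) (μ : Fin (D + 1)) : Ed D → ℝ :=
  bdryG m (fun c x => ∑ a, jpdP (F a) c (x, jet m u x, fun l => g l x) * ρ a x) v μ

/-- j^μ_{(F̃q)}|_{F̃=F} for an extended system. -/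
noncomputable def jFtilqP {D : ℕ} {ι γ κ : Type} [Fintype ι] [DecidableEq ι] [Fintype γ]
    [Fintype κ] (m : ℕ) (F q : κ → PJet ι γ m D → ℝ) (u : ι → Ed D → ℝ) (g : γ → Ed D → ℝ)
    (v : ι → Ed D → ℝ) (μ : Fin (D + 1)) : Ed D → ℝ :=
  bdryG m (fun c x =>
    ∑ a, realizeP m (F a) u g x * jpdP (q a) c (x, jet m u x, fun l => g l x)) v μ

/-- The adjoint equations E^i(F^aρ_a) for an extended system. -/
noncomputable def adjointOpP {D : ℕ} {ι γ κ : Type} [Fintype ι] [DecidableEq ι] [Fintype γ]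
    [Fintype κ] (m : ℕ) (F : κ → PJet ι γ m D → ℝ) (u : ι → Ed D → ℝ) (g : γ → Ed D → ℝ)
    (ρ : κ → Ed D → ℝ) (i : ι) : Ed D → ℝ :=
  fun x => ∑ β : MIdx m D, (-1 : ℝ) ^ (β.1 : ℕ) *
    pds (MIdx.toList β)
      (fun y => ∑ a, jpdP (F a) (i, β) (y, jet m u y, fun l => g l y) * ρ a y) x

/-- Equivalence of configuration-indexed currents relative to the extended system. -/
def EquivCurrentsExt {D : ℕ} {ι γ κ : Type} [Fintype ι] [Fintype γ] (m : ℕ) (Ω : Set (Ed D))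
    (F : κ → PJet ι γ m D → ℝ)
    (C1 C2 : (ι → Ed D → ℝ) → (γ → Ed D → ℝ) → Fin (D + 1) → Ed D → ℝ) : Prop :=
  ∃ (m' : ℕ) (Jb Jh : Fin (D + 1) → Ed D × Jet (ι ⊕ γ) m' D → ℝ),
    (∀ μ, ContDiff ℝ (⊤ : ℕ∞) (Jb μ)) ∧ (∀ μ, ContDiff ℝ (⊤ : ℕ∞) (Jh μ)) ∧
    (∀ u g, SmoothFields Ω u → SmoothFields Ω g → ∀ μ, ∀ x ∈ Ω,
      C1 u g μ x - C2 u g μ x =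
        realize m' (Jb μ) (Sum.elim u g) x + realize m' (Jh μ) (Sum.elim u g) x) ∧
    (∀ u g, SmoothFields Ω u → SmoothFields Ω g → ∀ x ∈ Ω,
      Dvg (fun μ => realize m' (Jb μ) (Sum.elim u g)) x = 0) ∧
    (∀ u g, ExtSol m Ω F u g → ∀ μ, ∀ x ∈ Ω, realize m' (Jh μ) (Sum.elim u g) x = 0)

/-- The auxiliary Lagrangian Ľ = F^aρ_a + (∂_μ g_l)ϑ^{μl} of an extended system,
as a local function of the combined fields ((u, g), (ρ, ϑ)). -/
noncomputable def Lcheck {D : ℕ} {ι γ κ : Type} [Fintype κ] [Fintype γ] {m : ℕ} (hm : 0 < m)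
    (F : κ → PJet ι γ m D → ℝ) :
    Ed D × Jet ((ι ⊕ γ) ⊕ (κ ⊕ Fin (D + 1) × γ)) m D → ℝ :=
  fun p =>
    (∑ a, F a (p.1, fun c => p.2 (Sum.inl (Sum.inl c.1), c.2),
        fun l => p.2 (Sum.inl (Sum.inr l), zeroIdx)) * p.2 (Sum.inr (Sum.inl a), zeroIdx)) +
    ∑ μ, ∑ l, p.2 (Sum.inl (Sum.inr l), oneIdx hm μ) * p.2 (Sum.inr (Sum.inr (μ, l)), zeroIdx)

/-!
Deform `(u, c)` along the characteristic: `U_t = (u, c) + t (δu, δg)`. By (ii) the `g`-part of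
`U_t` is stationary at each point `x`, and since `J` does not see derivatives of `g`, the
multiplier identity still holds there: `D_μ J^μ[U_t](x) = (F^a q_a)[U_t](x)`. Differentiating at
`t = 0`, the left side becomes `D_μ δJ^μ` because mixed partials commute, and the right side
becomes `δ(F^a q_a) = ω F^a q_a = ω D_μ J^μ` by (i).
-/

section Calculus

variable {E F G H : Type*} [NormedAddCommGroup E] [NormedSpace ℝ E] [NormedAddCommGroup F]
  [NormedSpace ℝ F] [NormedAddCommGroup G] [NormedSpace ℝ G] [NormedAddCommGroup H]
  [NormedSpace ℝ H]

theorem fderiv_comp_eq_of_hasFDerivAt_zero {f : E × F × G → H} {A : E → F} {g : E → G} {x : E}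
    (hf : DifferentiableAt ℝ f (x, A x, g x)) (hA : DifferentiableAt ℝ A x)
    (hg : HasFDerivAt g (0 : E →L[ℝ] G) x) :
    fderiv ℝ (fun y => f (y, A y, g y)) x = fderiv ℝ (fun y => f (y, A y, g x)) x := by
  have h1 := hf.hasFDerivAt.comp x ((hasFDerivAt_id x).prodMk (hA.hasFDerivAt.prodMk hg))
  have h2 := hf.hasFDerivAt.comp x
    ((hasFDerivAt_id x).prodMk (hA.hasFDerivAt.prodMk (hasFDerivAt_const (g x) x)))
  exact h1.fderiv.trans h2.fderiv.symm

/-- Schwarz's theorem in the form `∂_t (∂_y Φ) = ∂_y (∂_t Φ)` at `(t₀, x)`. -/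
theorem hasDerivAt_fderiv_slice {Φ : ℝ × E → F} {t₀ : ℝ} {x : E} (hΦ : ContDiffAt ℝ 2 Φ (t₀, x))
    (v : E) :
    HasDerivAt (fun t => fderiv ℝ (fun y => Φ (t, y)) x v)
      (fderiv ℝ (fun y => deriv (fun t => Φ (t, y)) t₀) x v) t₀ := by
  have hdiff : ∀ᶠ p in nhds (t₀, x), DifferentiableAt ℝ Φ p :=
    (hΦ.eventually (by simp)).mono fun p hp => hp.differentiableAt (by simp)
  have hslice_y : ∀ t y, DifferentiableAt ℝ Φ (t, y) →
      fderiv ℝ (fun y => Φ (t, y)) y = (fderiv ℝ Φ (t, y)).comp (ContinuousLinearMap.inr ℝ ℝ E) :=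
    fun t y h => (h.hasFDerivAt.comp y (hasFDerivAt_prodMk_right t y)).fderiv
  have hslice_t : ∀ t y, DifferentiableAt ℝ Φ (t, y) →
      deriv (fun t => Φ (t, y)) t = fderiv ℝ Φ (t, y) (1, 0) :=
    fun t y h => (h.hasFDerivAt.comp_hasDerivAt t
      ((hasDerivAt_id t).prodMk (hasDerivAt_const t y))).deriv
  have hΦ' : DifferentiableAt ℝ (fderiv ℝ Φ) (t₀, x) :=
    (hΦ.fderiv_right (m := 1) le_rfl).differentiableAt one_ne_zero
  have hsymm := hΦ.isSymmSndFDerivAt (by simp)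
  have ht : HasDerivAt (fun t => fderiv ℝ Φ (t, x) (0, v))
      (fderiv ℝ (fderiv ℝ Φ) (t₀, x) (1, 0) (0, v)) t₀ := by
    have := (hΦ'.hasFDerivAt.clm_apply (hasFDerivAt_const ((0 : ℝ), v) _)).comp_hasDerivAt t₀
      ((hasDerivAt_id t₀).prodMk (hasDerivAt_const t₀ x))
    simpa [Function.comp_def] using this
  have hy : HasFDerivAt (fun y => fderiv ℝ Φ (t₀, y) (1, 0))
      ((fderiv ℝ (fderiv ℝ Φ) (t₀, x)).flip (1, 0) ∘L ContinuousLinearMap.inr ℝ ℝ E) x := by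
    have := (hΦ'.hasFDerivAt.clm_apply (hasFDerivAt_const ((1 : ℝ), (0 : E)) _)).comp x
      (hasFDerivAt_prodMk_right t₀ x)
    simpa [Function.comp_def] using this
  have hdt : ∀ᶠ t in nhds t₀, DifferentiableAt ℝ Φ (t, x) :=
    ((Continuous.prodMk_left x).tendsto t₀).eventually hdiff
  have hdy : ∀ᶠ y in nhds x, DifferentiableAt ℝ Φ (t₀, y) :=
    ((Continuous.prodMk_right t₀).tendsto x).eventually hdiff
  refine (ht.congr_of_eventuallyEq (hdt.mono fun t h => ?_)).congr_deriv ?_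
  · simp [hslice_y t x h]
  · rw [(hy.congr_of_eventuallyEq (hdy.mono fun y h => hslice_t t₀ y h)).fderiv]
    simp [hsymm (0, v)]

end Calculus

section Jets

variable {D m : ℕ} {ι : Type} {Ω : Set (Ed D)}

theorem hasFDerivAt_zero_of_pd_eq_zero {f : Ed D → ℝ} {x : Ed D} (hf : DifferentiableAt ℝ f x)
    (h : ∀ μ, pd μ f x = 0) : HasFDerivAt f (0 : Ed D →L[ℝ] ℝ) x := by
  convert hf.hasFDerivAt
  refine ContinuousLinearMap.coe_injective (LinearMap.pi_ext fun μ a => ?_)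
  have : (Pi.single μ a : Ed D) = a • Pi.single μ 1 := by simp [← Pi.single_smul]
  have hμ : fderiv ℝ f x (Pi.single μ 1) = 0 := h μ
  simp [this, hμ]

theorem Dvg_sub_const_mul {A B : Fin (D + 1) → Ed D → ℝ} {x : Ed D}
    (hA : ∀ μ, DifferentiableAt ℝ (A μ) x) (hB : ∀ μ, DifferentiableAt ℝ (B μ) x) (ω : ℝ) :
    Dvg (fun μ y => A μ y - ω * B μ y) x = Dvg A x - ω * Dvg B x := by
  simp only [Dvg, pd, Finset.mul_sum, ← Finset.sum_sub_distrib]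
  refine Finset.sum_congr rfl fun μ _ => ?_
  rw [fderiv_fun_sub (hA μ) ((hB μ).const_mul ω), fderiv_const_mul (hB μ)]
  rfl

theorem contDiffOn_pds (hΩ : IsOpen Ω) (L : List (Fin (D + 1))) {f : Ed D → ℝ}
    (hf : ContDiffOn ℝ (⊤ : ℕ∞) f Ω) : ContDiffOn ℝ (⊤ : ℕ∞) (pds L f) Ω := by
  induction L with
  | nil => exact hf
  | cons μ L ih => exact (ih.fderiv_of_isOpen hΩ (by simp)).clm_apply contDiffOn_const

theorem pds_add_const_mul (hΩ : IsOpen Ω) (L : List (Fin (D + 1))) {f g : Ed D → ℝ}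
    (hf : ContDiffOn ℝ (⊤ : ℕ∞) f Ω) (hg : ContDiffOn ℝ (⊤ : ℕ∞) g Ω) (t : ℝ) :
    ∀ y ∈ Ω, pds L (fun z => f z + t * g z) y = pds L f y + t * pds L g y := by
  induction L with
  | nil => exact fun _ _ => rfl
  | cons μ L ih =>
    intro y hy
    have hdiff : ∀ h : Ed D → ℝ, ContDiffOn ℝ (⊤ : ℕ∞) h Ω → DifferentiableAt ℝ (pds L h) y :=
      fun h hh => ((contDiffOn_pds hΩ L hh).contDiffAt (hΩ.mem_nhds hy)).differentiableAt
        (by simp)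
    have hL : pds L (fun z => f z + t * g z) =ᶠ[nhds y] fun z => pds L f z + t * pds L g z :=
      Filter.eventuallyEq_of_mem (hΩ.mem_nhds hy) ih
    simp only [pds, pd, hL.fderiv_eq]
    rw [fderiv_fun_add (hdiff f hf) ((hdiff g hg).const_mul t), fderiv_const_mul (hdiff g hg)]
    rfl

theorem jet_add_smul (hΩ : IsOpen Ω) {U V : ι → Ed D → ℝ} (hU : SmoothFields Ω U)
    (hV : SmoothFields Ω V) (t : ℝ) :
    ∀ y ∈ Ω, jet m (fun w z => U w z + t * V w z) y = jet m U y + t • jet m V y :=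
  fun y hy => funext fun c => pds_add_const_mul hΩ _ (hU c.1) (hV c.1) t y hy

variable [Fintype ι]

theorem contDiffOn_jet (hΩ : IsOpen Ω) {U : ι → Ed D → ℝ} (hU : SmoothFields Ω U) :
    ContDiffOn ℝ (⊤ : ℕ∞) (jet m U) Ω :=
  contDiffOn_pi.2 fun c => contDiffOn_pds hΩ _ (hU c.1)

theorem contDiffOn_realize (hΩ : IsOpen Ω) {f : Ed D × Jet ι m D → ℝ}
    (hf : ContDiff ℝ (⊤ : ℕ∞) f) {U : ι → Ed D → ℝ} (hU : SmoothFields Ω U) :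
    ContDiffOn ℝ (⊤ : ℕ∞) (realize m f U) Ω :=
  hf.comp_contDiffOn (contDiffOn_id.prodMk (contDiffOn_jet hΩ hU))

variable [DecidableEq ι]

theorem variation_eq_fderiv (f : Ed D × Jet ι m D → ℝ) (U V : ι → Ed D → ℝ) (y : Ed D) :
    variation m f U V y = fderiv ℝ f (y, jet m U y) (0, jet m V y) := by
  have hsum : ((0 : Ed D), jet m V y) =
      ∑ c : ι × MIdx m D, jet m V y c • ((0 : Ed D), (Pi.single c 1 : Jet ι m D)) := by
    ext c'
    · simp [Prod.fst_sum]
    · simp [Prod.snd_sum, Pi.single_apply]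
  rw [hsum, map_sum]
  refine Finset.sum_congr rfl fun c _ => ?_
  rw [map_smul, smul_eq_mul, mul_comm]
  rfl

theorem hasDerivAt_variation {f : Ed D × Jet ι m D → ℝ} {U V : ι → Ed D → ℝ} {y : Ed D}
    (hf : DifferentiableAt ℝ f (y, jet m U y)) :
    HasDerivAt (fun t : ℝ => f (y, jet m U y + t • jet m V y)) (variation m f U V y) 0 := by
  have hline : HasDerivAt (fun t : ℝ => (y, jet m U y + t • jet m V y)) (0, jet m V y) 0 := by
    refine (hasDerivAt_const 0 y).prodMk ?_
    simpa using ((hasDerivAt_id (0 : ℝ)).smul_const (jet m V y)).const_add (jet m U y)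
  rw [variation_eq_fderiv]
  exact (by simpa using hf.hasFDerivAt : HasFDerivAt f _ (y, jet m U y + (0 : ℝ) • jet m V y))
    |>.comp_hasDerivAt 0 hline

theorem contDiffOn_variation (hΩ : IsOpen Ω) {f : Ed D × Jet ι m D → ℝ}
    (hf : ContDiff ℝ (⊤ : ℕ∞) f) {U V : ι → Ed D → ℝ} (hU : SmoothFields Ω U)
    (hV : SmoothFields Ω V) : ContDiffOn ℝ (⊤ : ℕ∞) (variation m f U V) Ω := by
  simp only [funext (variation_eq_fderiv f U V)]
  exact ((hf.fderiv_right (m := ((⊤ : ℕ∞) : WithTop ℕ∞)) (by simp)).comp_contDiffOn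
    (contDiffOn_id.prodMk (contDiffOn_jet hΩ hU))).clm_apply
    (contDiffOn_const.prodMk (contDiffOn_jet hΩ hV))

theorem hasDerivAt_dvg_jet_add_smul (hΩ : IsOpen Ω) {f : Fin (D + 1) → Ed D × Jet ι m D → ℝ}
    (hf : ∀ μ, ContDiff ℝ (⊤ : ℕ∞) (f μ)) {U V : ι → Ed D → ℝ} (hU : SmoothFields Ω U)
    (hV : SmoothFields Ω V) {x : Ed D} (hx : x ∈ Ω) :
    HasDerivAt (fun t : ℝ => Dvg (fun μ y => f μ (y, jet m U y + t • jet m V y)) x)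
      (Dvg (fun μ => variation m (f μ) U V) x) 0 := by
  refine HasDerivAt.fun_sum fun μ _ => ?_
  have hjet : ∀ {W : ι → Ed D → ℝ}, SmoothFields Ω W → ContDiffAt ℝ 2 (jet m W) x := fun hW =>
    ((contDiffOn_jet hΩ hW).contDiffAt (hΩ.mem_nhds hx)).of_le (WithTop.coe_le_coe.2 le_top)
  have hΦ : ContDiffAt ℝ 2 (fun p : ℝ × Ed D => f μ (p.2, jet m U p.2 + p.1 • jet m V p.2))
      (0, x) :=
    ((hf μ).of_le (WithTop.coe_le_coe.2 le_top)).contDiffAt.comp (0, x)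
      (contDiffAt_snd.prodMk ((hjet hU).comp (0, x) contDiffAt_snd |>.add
        (contDiffAt_fst.smul ((hjet hV).comp (0, x) contDiffAt_snd))))
  have hvar : (fun y => deriv (fun t : ℝ => f μ (y, jet m U y + t • jet m V y)) 0) =
      variation m (f μ) U V :=
    funext fun y => (hasDerivAt_variation ((hf μ).differentiable (by simp) _)).deriv
  have h := hasDerivAt_fderiv_slice hΦ (Pi.single μ 1)
  rw [hvar] at h
  exact h

end Jets

section Extended

variable {D m : ℕ} {ι γ κ : Type} {Ω : Set (Ed D)}

theorem realizeP_eq_realize_liftP (f : PJet ι γ m D → ℝ) (W : ι ⊕ γ → Ed D → ℝ) :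
    realizeP m f (fun i => W (Sum.inl i)) (fun l => W (Sum.inr l)) = realize m (liftP f) W :=
  rfl

variable [Fintype ι] [Fintype γ]

theorem contDiff_liftP {f : PJet ι γ m D → ℝ} (hf : ContDiff ℝ (⊤ : ℕ∞) f) :
    ContDiff ℝ (⊤ : ℕ∞) (liftP f) :=
  hf.comp (by fun_prop)

/-- Since `J` does not involve derivatives of `g`, the identity for constant `g` persists at
points where `g` is stationary. -/
theorem ParamMultiplier.sum_eq_dvg_of_hasFDerivAt_zero [Fintype κ] (hΩ : IsOpen Ω)
    {F q : κ → PJet ι γ m D → ℝ} {J : Fin (D + 1) → PJet ι γ m D → ℝ}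
    (hpm : ParamMultiplier m Ω F q J) (hJ : ∀ μ, ContDiff ℝ (⊤ : ℕ∞) (J μ))
    {u : ι → Ed D → ℝ} {g : γ → Ed D → ℝ} (hu : SmoothFields Ω u) {x : Ed D} (hx : x ∈ Ω)
    (hg : ∀ l, HasFDerivAt (g l) (0 : Ed D →L[ℝ] ℝ) x) :
    ∑ a, realizeP m (F a) u g x * realizeP m (q a) u g x =
      Dvg (fun μ => realizeP m (J μ) u g) x := by
  refine (hpm u hu (fun l => g l x) x hx).trans ?_
  refine Finset.sum_congr rfl fun μ _ => ?_
  have hjet : DifferentiableAt ℝ (jet m u) x :=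
    ((contDiffOn_jet hΩ hu).contDiffAt (hΩ.mem_nhds hx)).differentiableAt (by simp)
  have hg' : HasFDerivAt (fun y l => g l y) (0 : Ed D →L[ℝ] γ → ℝ) x :=
    hasFDerivAt_pi'.2 fun l => by simpa using hg l
  unfold pd realizeP
  rw [← fderiv_comp_eq_of_hasFDerivAt_zero ((hJ μ).differentiable (by simp) _) hjet hg']

theorem ParamMultiplier.dvg_jet_add_smul_eq [Fintype κ]
    (hΩ : IsOpen Ω) {F q : κ → PJet ι γ m D → ℝ} {J : Fin (D + 1) → PJet ι γ m D → ℝ}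
    (hpm : ParamMultiplier m Ω F q J) (hJ : ∀ μ, ContDiff ℝ (⊤ : ℕ∞) (J μ))
    {U V : ι ⊕ γ → Ed D → ℝ} (hU : SmoothFields Ω U) (hV : SmoothFields Ω V) {x : Ed D}
    (hx : x ∈ Ω) (hUg : ∀ l, HasFDerivAt (U (Sum.inr l)) (0 : Ed D →L[ℝ] ℝ) x)
    (hVg : ∀ l, HasFDerivAt (V (Sum.inr l)) (0 : Ed D →L[ℝ] ℝ) x) (t : ℝ) :
    Dvg (fun μ y => liftP (J μ) (y, jet m U y + t • jet m V y)) x =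
      ∑ a, liftP (F a) (x, jet m U x + t • jet m V x) *
        liftP (q a) (x, jet m U x + t • jet m V x) := by
  set W : ι ⊕ γ → Ed D → ℝ := fun w y => U w y + t * V w y
  have hWjet : ∀ y ∈ Ω, jet m W y = jet m U y + t • jet m V y := jet_add_smul hΩ hU hV t
  have hmul := hpm.sum_eq_dvg_of_hasFDerivAt_zero hΩ hJ (u := fun i => W (Sum.inl i))
    (g := fun l => W (Sum.inr l))
    (fun i => (hU _).add (contDiffOn_const.mul (hV _))) hx
    (fun l => ((hUg l).add ((hVg l).const_mul t)).congr_fderiv (by simp))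
  simp only [realizeP_eq_realize_liftP] at hmul
  rw [← hWjet x hx]
  refine (Finset.sum_congr rfl fun μ _ => ?_).trans hmul.symm
  have hev : (fun y => liftP (J μ) (y, jet m U y + t • jet m V y)) =ᶠ[nhds x]
      realize m (liftP (J μ)) W :=
    Filter.eventuallyEq_of_mem (hΩ.mem_nhds hx) fun y hy => by
      simp only [realize, hWjet y hy]
  simp only [pd, hev.fderiv_eq]

end Extended

/-- If δ(F^aq_a) = ωF^aq_a for arbitrary u, g and D_μδg_l = 0 for
constant g, then δJ^μ − ωJ^μ is conserved for arbitrary u and constant g. -/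
theorem statement15 (D N P M m : ℕ) (Ω : Set (Ed D)) (hΩ : IsOpen Ω)
    (F : Fin M → PJet (Fin N) (Fin P) m D → ℝ) (hF : ∀ a, ContDiff ℝ (⊤ : ℕ∞) (F a))
    (q : Fin M → PJet (Fin N) (Fin P) m D → ℝ) (hq : ∀ a, ContDiff ℝ (⊤ : ℕ∞) (q a))
    (J : Fin (D + 1) → PJet (Fin N) (Fin P) m D → ℝ) (hJ : ∀ μ, ContDiff ℝ (⊤ : ℕ∞) (J μ))
    (ω : ℝ)
    (δu : Fin N → Ed D × Jet (Fin N ⊕ Fin P) m D → ℝ)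
    (hδu : ∀ i, ContDiff ℝ (⊤ : ℕ∞) (δu i))
    (δg : Fin P → Ed D × Jet (Fin N ⊕ Fin P) m D → ℝ)
    (hδg : ∀ l, ContDiff ℝ (⊤ : ℕ∞) (δg l))
    (hpm : ParamMultiplier m Ω F q J)
    -- (i) δ(F^a q_a) = ω F^a q_a for every smooth u and g:
    (hi : ∀ u g, SmoothFields Ω u → SmoothFields Ω g → ∀ x ∈ Ω,
      variation m (fun p => ∑ a, liftP (F a) p * liftP (q a) p) (Sum.elim u g)
        (Sum.elim (fun i => realize m (δu i) (Sum.elim u g))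
          (fun l => realize m (δg l) (Sum.elim u g))) x
        = ω * ∑ a, realizeP m (F a) u g x * realizeP m (q a) u g x)
    -- (ii) D_μ δg_l = 0 for constant g:
    (hii : ∀ u, SmoothFields Ω u → ∀ c : Fin P → ℝ, ∀ l μ, ∀ x ∈ Ω,
      pd μ (realize m (δg l) (Sum.elim u (fun l' _ => c l'))) x = 0) :
    ∀ u, SmoothFields Ω u → ∀ c : Fin P → ℝ, ∀ x ∈ Ω,
      Dvg (fun μ y =>
        variation m (liftP (J μ)) (Sum.elim u (fun l _ => c l))
          (Sum.elim (fun i => realize m (δu i) (Sum.elim u (fun l _ => c l)))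
            (fun l => realize m (δg l) (Sum.elim u (fun l' _ => c l')))) y
        - ω * realizeP m (J μ) u (fun l _ => c l) y) x = 0 := by
  intro u hu c x hx
  set U : Fin N ⊕ Fin P → Ed D → ℝ := Sum.elim u (fun l _ => c l)
  set V : Fin N ⊕ Fin P → Ed D → ℝ :=
    Sum.elim (fun i => realize m (δu i) U) (fun l => realize m (δg l) U)
  have hU : SmoothFields Ω U := fun w => w.rec (fun i => hu i) fun _ => contDiffOn_const
  have hV : SmoothFields Ω V := fun w =>
    w.rec (fun i => contDiffOn_realize hΩ (hδu i) hU) fun l => contDiffOn_realize hΩ (hδg l) hU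
  have hVg : ∀ l, HasFDerivAt (V (Sum.inr l)) (0 : Ed D →L[ℝ] ℝ) x := fun l =>
    hasFDerivAt_zero_of_pd_eq_zero
      (((hV (Sum.inr l)).contDiffAt (hΩ.mem_nhds hx)).differentiableAt (by simp))
      (fun μ => hii u hu c l μ x hx)
  have hδJ := hasDerivAt_dvg_jet_add_smul hΩ (fun μ => contDiff_liftP (hJ μ)) hU hV hx
  have hωJ : HasDerivAt
      (fun t : ℝ => Dvg (fun μ y => liftP (J μ) (y, jet m U y + t • jet m V y)) x)
      (ω * Dvg (fun μ => realizeP m (J μ) u (fun l _ => c l)) x) 0 := by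
    rw [funext (hpm.dvg_jet_add_smul_eq hΩ hJ hU hV hx (fun _ => hasFDerivAt_const _ x) hVg)]
    exact (hasDerivAt_variation ((ContDiff.sum fun a _ => (contDiff_liftP (hF a)).mul
      (contDiff_liftP (hq a))).differentiable (by simp) _)).congr_deriv
      ((hi u _ hu (fun _ => contDiffOn_const) x hx).trans (congrArg (ω * ·) (hpm u hu c x hx)))
  rw [Dvg_sub_const_mul, hδJ.unique hωJ, sub_self]
  · exact fun μ => ((contDiffOn_variation hΩ (contDiff_liftP (hJ μ)) hU hV).contDiffAt
      (hΩ.mem_nhds hx)).differentiableAt (by simp)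
  · exact fun μ => ((contDiffOn_realize hΩ (contDiff_liftP (hJ μ)) hU).contDiffAt
      (hΩ.mem_nhds hx)).differentiableAt (by simp)

end Paper
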